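/- arXiv:2211.05252 — 6 statements merged into one kernel-verified Lean document; each statement's English description precedes it below -/
import Mathlib

section
/- Let p be an odd prime. For every α ∈ ℚ_p there exists a unique p-adic fraction b such that |b| < p/2 and ‖α − b‖_p < 1. (This unique element is Browkin's integral floor s(α), obtained by truncating the p-adic expansion of α with digits in {−(p−1)/2, …, (p−1)/2} at the power p^0 inclusive.) -/
/-!
Approximating `α * p ^ n ∈ ℤ_[p]` by a natural number gives a `p`-adic fraction `b` with
`‖α - b‖ < 1`; subtracting the multiple of `p` nearest to `b` moves it into `[-p/2, p/2]` and keeps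
`‖α - b‖ < 1`, and the endpoints `±p/2` are not `p`-adic fractions since `p` is odd. Two solutions
differ by a `p`-adic fraction of `p`-adic norm `< 1`, that is, by an element of `pℤ`, and by less
than `p` in absolute value, so they coincide.
-/

/-- A rational number `a` is a `p`-adic fraction if `a * p^m` is an integer
for some natural number `m`, i.e. `a ∈ ℤ[1/p]`. -/
def IsPadicFrac (p : ℕ) (a : ℚ) : Prop := ∃ (m : ℕ) (z : ℤ), a * (p : ℚ) ^ m = (z : ℚ)

namespace IsPadicFrac

variable {p : ℕ} {a b : ℚ}

lemma intCast (p : ℕ) (z : ℤ) : IsPadicFrac p z := ⟨0, z, by simp⟩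

lemma sub (ha : IsPadicFrac p a) (hb : IsPadicFrac p b) : IsPadicFrac p (a - b) := by
  obtain ⟨m, y, hy⟩ := ha
  obtain ⟨n, z, hz⟩ := hb
  refine ⟨m + n, y * p ^ n - z * p ^ m, ?_⟩
  push_cast
  rw [← hy, ← hz]
  ring

lemma abs_ne_half (hp : Odd p) (ha : IsPadicFrac p a) : |a| ≠ p / 2 := by
  obtain ⟨m, z, hz⟩ := ha
  intro h
  have h2z : 2 * |z| = (p : ℤ) ^ (m + 1) := by
    have : 2 * |(z : ℚ)| = (p : ℚ) ^ (m + 1) := by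
      rw [← hz, abs_mul, h, abs_of_nonneg (by positivity), pow_succ]
      ring
    exact_mod_cast this
  have : Odd ((p : ℤ) ^ (m + 1)) := (hp.natCast (R := ℤ)).pow
  exact Int.not_even_iff_odd.mpr this ⟨|z|, by omega⟩

variable [hp : Fact p.Prime]

lemma exists_eq_mul_of_norm_lt_one (ha : IsPadicFrac p a) (h : ‖(a : ℚ_[p])‖ < 1) :
    ∃ k : ℤ, a = p * k := by
  obtain ⟨m, z, hz⟩ := ha
  have hz_lt : ‖(z : ℚ_[p])‖ < (p : ℝ) ^ (-((m + 1 : ℕ) : ℤ) + 1) := by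
    have hz' : (z : ℚ_[p]) = a * (p : ℚ_[p]) ^ m := by exact_mod_cast hz.symm
    rw [hz', norm_mul, Padic.norm_p_pow, show -((m + 1 : ℕ) : ℤ) + 1 = -m by push_cast; ring]
    exact mul_lt_of_lt_one_left (zpow_pos (by exact_mod_cast hp.out.pos) _) h
  obtain ⟨k, rfl⟩ := (Padic.norm_int_le_pow_iff_dvd z (m + 1)).mp
    ((Padic.norm_le_pow_iff_norm_lt_pow_add_one _ _).mpr hz_lt)
  refine ⟨k, mul_right_cancel₀ (pow_ne_zero m (Nat.cast_ne_zero.mpr hp.out.ne_zero)) ?_⟩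
  rw [hz]
  push_cast
  ring

lemma eq_of_norm_sub_lt_one (ha : IsPadicFrac p a) (hb : IsPadicFrac p b)
    (hnorm : ‖((a - b : ℚ) : ℚ_[p])‖ < 1) (habs : |a - b| < p) : a = b := by
  obtain ⟨k, hk⟩ := (ha.sub hb).exists_eq_mul_of_norm_lt_one hnorm
  have hp_pos : (0 : ℚ) < p := by exact_mod_cast hp.out.pos
  have hk0 : k = 0 := by
    rw [hk, abs_mul, abs_of_pos hp_pos, mul_lt_iff_lt_one_right hp_pos] at habs
    exact Int.abs_lt_one_iff.mp (by exact_mod_cast habs)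
  rw [← sub_eq_zero, hk, hk0, Int.cast_zero, mul_zero]

end IsPadicFrac

namespace Padic

variable {p : ℕ} [hp : Fact p.Prime]

lemma exists_isPadicFrac_norm_sub_lt_one (α : ℚ_[p]) :
    ∃ b : ℚ, IsPadicFrac p b ∧ ‖α - b‖ < 1 := by
  have hp_gt : (1 : ℝ) < p := by exact_mod_cast hp.out.one_lt
  obtain ⟨n, hn⟩ := pow_unbounded_of_one_lt ‖α‖ hp_gt
  have hpn : ‖(p : ℚ_[p]) ^ n‖ = ((p : ℝ) ^ n)⁻¹ := by
    rw [norm_p_pow, zpow_neg, zpow_natCast]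
  have hy : ‖α * (p : ℚ_[p]) ^ n‖ ≤ 1 := by
    rw [norm_mul, hpn, ← div_eq_mul_inv]
    exact div_le_one_of_le₀ hn.le (by positivity)
  let y : ℤ_[p] := ⟨α * p ^ n, hy⟩
  obtain ⟨z, hz⟩ := PadicInt.denseRange_natCast.exists_dist_lt y
    (by positivity : (0 : ℝ) < ((p : ℝ) ^ n)⁻¹)
  rw [dist_eq_norm, PadicInt.norm_def, PadicInt.coe_sub, PadicInt.coe_natCast] at hz
  have hpn0 : (p : ℚ_[p]) ^ n ≠ 0 := pow_ne_zero n (Nat.cast_ne_zero.mpr hp.out.ne_zero)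
  refine ⟨z / p ^ n, ⟨n, z, by field_simp; simp⟩, ?_⟩
  have hαb : α - ((z / p ^ n : ℚ) : ℚ_[p]) = (α * p ^ n - z) / p ^ n := by
    push_cast
    field_simp
  rw [hαb, norm_div, hpn, div_inv_eq_mul, ← lt_inv_mul_iff₀' (by positivity)]
  simpa using hz

lemma exists_isPadicFrac_abs_le_norm_sub_lt_one (α : ℚ_[p]) :
    ∃ b : ℚ, IsPadicFrac p b ∧ |b| ≤ p / 2 ∧ ‖α - b‖ < 1 := by
  obtain ⟨b, hb, hbα⟩ := exists_isPadicFrac_norm_sub_lt_one α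
  have hp_pos : (0 : ℚ) < p := by exact_mod_cast hp.out.pos
  set k := round (b / p)
  refine ⟨b - p * k, by simpa using hb.sub (.intCast p (p * k)), ?_, ?_⟩
  · calc |b - p * k| = |p * (b / p - k)| := by rw [mul_sub, mul_div_cancel₀ _ hp_pos.ne']
      _ = p * |b / p - k| := by rw [abs_mul, abs_of_pos hp_pos]
      _ ≤ p * (1 / 2) := mul_le_mul_of_nonneg_left (abs_sub_round _) hp_pos.le
      _ = p / 2 := by ring
  · have hpk : ‖((p * k : ℤ) : ℚ_[p])‖ < 1 :=
      norm_intCast_lt_one_iff.mpr (dvd_mul_right _ _)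
    calc ‖α - ((b - p * k : ℚ) : ℚ_[p])‖ = ‖(α - b) + ((p * k : ℤ) : ℚ_[p])‖ := by
          push_cast; ring_nf
      _ ≤ max ‖α - b‖ ‖((p * k : ℤ) : ℚ_[p])‖ := IsUltrametricDist.norm_add_le_max _ _
      _ < 1 := max_lt hbα hpk

end Padic

theorem stmt_2 (p : ℕ) [Fact p.Prime] (hp : p ≠ 2) (α : ℚ_[p]) :
    ∃! b : ℚ, IsPadicFrac p b ∧ |b| < (p : ℚ) / 2 ∧ ‖α - (b : ℚ_[p])‖ < 1 := by
  obtain ⟨b, hb, hb_le, hbα⟩ := Padic.exists_isPadicFrac_abs_le_norm_sub_lt_one α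
  have hb_lt : |b| < p / 2 :=
    hb_le.lt_of_ne (hb.abs_ne_half ((Fact.out : p.Prime).odd_of_ne_two hp))
  refine ⟨b, ⟨hb, hb_lt, hbα⟩, ?_⟩
  rintro c ⟨hc, hc_lt, hcα⟩
  refine hc.eq_of_norm_sub_lt_one hb ?_ ?_
  · calc ‖((c - b : ℚ) : ℚ_[p])‖ = ‖(α - b) + (c - α)‖ := by push_cast; ring_nf
      _ ≤ max ‖α - b‖ ‖c - α‖ := IsUltrametricDist.norm_add_le_max _ _
      _ < 1 := max_lt hbα (by rwa [norm_sub_rev])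
  · calc |c - b| ≤ |c| + |b| := abs_sub _ _
      _ < p / 2 + p / 2 := add_lt_add hc_lt hb_lt
      _ = p := add_halves _
end

section
/- Let p be an odd prime and let (b_n)_{n≥0} be a sequence of nonzero p-adic fractions such that v_p(b_{2n}) = 0 for all n ≥ 1 and v_p(b_{2n+1}) < 0 for all n ≥ 0. Then the continued fraction [b_0, b_1, b_2, …] converges in ℚ_p, i.e., the sequence of convergents A_n/B_n converges to a p-adic number. -/
section Ultrametric

variable {K : Type*} [NormedField K] [IsUltrametricDist K]

lemma norm_mul_add_of_norm_lt {c x y : K} (h : ‖y‖ < ‖c‖ * ‖x‖) :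
    ‖c * x + y‖ = ‖c‖ * ‖x‖ := by
  rw [← norm_mul] at h ⊢
  rw [IsUltrametricDist.norm_add_eq_max_of_norm_ne_norm h.ne', max_eq_left h.le]

variable {c β : ℕ → K} {R : ℝ}

lemma pow_le_norm_even_and_mul_le_norm_odd (hR : 1 < R)
    (hrec : ∀ n, β (n + 2) = c (n + 2) * β (n + 1) + β n)
    (hβ0 : ‖β 0‖ = 1) (hβ1 : R ≤ ‖β 1‖)
    (hodd : ∀ n, R ≤ ‖c (2 * n + 1)‖) (heven : ∀ n, 1 ≤ n → ‖c (2 * n)‖ = 1) (n : ℕ) :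
    R ^ n ≤ ‖β (2 * n)‖ ∧ R * ‖β (2 * n)‖ ≤ ‖β (2 * n + 1)‖ := by
  induction n with
  | zero => simpa [hβ0] using hβ1
  | succ n ih =>
    obtain ⟨hpow, hstep⟩ := ih
    have hpos : 0 < ‖β (2 * n)‖ := lt_of_lt_of_le (by positivity) hpow
    have hc2 : ‖c (2 * n + 2)‖ = 1 := heven (n + 1) (by omega)
    have hc3 : R ≤ ‖c (2 * n + 3)‖ := hodd (n + 1)
    have h2 : ‖β (2 * n + 2)‖ = ‖β (2 * n + 1)‖ := by
      rw [hrec (2 * n), norm_mul_add_of_norm_lt] <;> rw [hc2, one_mul]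
      nlinarith
    have h3 : R * ‖β (2 * n + 2)‖ ≤ ‖β (2 * n + 3)‖ := by
      have hpos' : 0 < ‖β (2 * n + 2)‖ := by nlinarith
      rw [hrec (2 * n + 1), norm_mul_add_of_norm_lt] <;> nlinarith
    refine ⟨?_, h3⟩
    rw [Nat.mul_succ, h2, pow_succ']
    nlinarith

lemma pow_succ_le_norm_mul_norm_continuant_succ (hR : 1 < R)
    (hrec : ∀ n, β (n + 2) = c (n + 2) * β (n + 1) + β n)
    (hβ0 : ‖β 0‖ = 1) (hβ1 : R ≤ ‖β 1‖)
    (hodd : ∀ n, R ≤ ‖c (2 * n + 1)‖) (heven : ∀ n, 1 ≤ n → ‖c (2 * n)‖ = 1) (n : ℕ) :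
    R ^ (n + 1) ≤ ‖β n‖ * ‖β (n + 1)‖ := by
  have key := pow_le_norm_even_and_mul_le_norm_odd hR hrec hβ0 hβ1 hodd heven
  have hodd_pow (k : ℕ) : R * R ^ k ≤ ‖β (2 * k + 1)‖ :=
    (mul_le_mul_of_nonneg_left (key k).1 (by linarith)).trans (key k).2
  obtain ⟨k, rfl | rfl⟩ := Nat.even_or_odd' n
  · calc R ^ (2 * k + 1) = R ^ k * (R * R ^ k) := by ring
      _ ≤ ‖β (2 * k)‖ * ‖β (2 * k + 1)‖ := by gcongr; exacts [(key k).1, hodd_pow k]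
  · calc R ^ (2 * k + 1 + 1) = (R * R ^ k) * R ^ (k + 1) := by ring
      _ ≤ ‖β (2 * k + 1)‖ * ‖β (2 * (k + 1))‖ := by
        gcongr; exacts [hodd_pow k, (key (k + 1)).1]

end Ultrametric

lemma continuant_det {S : Type*} [CommRing S] {c α β : ℕ → S}
    (hα0 : α 0 = c 0) (hα1 : α 1 = c 1 * c 0 + 1)
    (hα : ∀ n, α (n + 2) = c (n + 2) * α (n + 1) + α n)
    (hβ0 : β 0 = 1) (hβ1 : β 1 = c 1)
    (hβ : ∀ n, β (n + 2) = c (n + 2) * β (n + 1) + β n) (n : ℕ) :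
    α (n + 1) * β n - α n * β (n + 1) = (-1) ^ n := by
  induction n with
  | zero => rw [hα1, hα0, hβ0, hβ1]; ring
  | succ n ih => rw [hα n, hβ n]; linear_combination -ih

lemma cauchySeq_div_of_det_of_pow_le {K : Type*} [NormedField K] {α β : ℕ → K} {R : ℝ}
    (hR : 1 < R) (hdet : ∀ n, α (n + 1) * β n - α n * β (n + 1) = (-1) ^ n)
    (hgrowth : ∀ n, R ^ (n + 1) ≤ ‖β n‖ * ‖β (n + 1)‖) :
    CauchySeq (fun n => α n / β n) := by
  have hβ : ∀ n, β n ≠ 0 := by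
    intro n h
    have := hgrowth n
    rw [h, norm_zero, zero_mul] at this
    exact (pow_pos (by linarith) _).not_ge this
  refine cauchySeq_of_le_geometric R⁻¹ 1 (inv_lt_one_of_one_lt₀ hR) fun n => ?_
  have hdiff : α (n + 1) / β (n + 1) - α n / β n = (-1) ^ n / (β n * β (n + 1)) := by
    rw [div_sub_div _ _ (hβ _) (hβ _), ← hdet n]
    ring
  calc dist (α n / β n) (α (n + 1) / β (n + 1))
      = (‖β n‖ * ‖β (n + 1)‖)⁻¹ := by
        rw [dist_comm, dist_eq_norm, hdiff]
        simp [norm_div, norm_mul]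
    _ ≤ (R ^ (n + 1))⁻¹ := inv_anti₀ (by positivity) (hgrowth n)
    _ ≤ 1 * R⁻¹ ^ n := by
        rw [one_mul, ← inv_pow, pow_succ]
        exact mul_le_of_le_one_right (by positivity) (inv_le_one_of_one_le₀ hR.le)

section Padic

variable {p : ℕ} [Fact p.Prime] {q : ℚ}

lemma Padic.norm_ratCast_eq_zpow (hq : q ≠ 0) : ‖(q : ℚ_[p])‖ = (p : ℝ) ^ (-padicValRat p q) := by
  rw [Padic.norm_eq_zpow_neg_valuation (by exact_mod_cast hq), Padic.valuation_ratCast]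

lemma Padic.norm_ratCast_eq_one (hq : q ≠ 0) (hv : padicValRat p q = 0) : ‖(q : ℚ_[p])‖ = 1 := by
  rw [Padic.norm_ratCast_eq_zpow hq, hv, neg_zero, zpow_zero]

lemma Padic.le_norm_ratCast_of_padicValRat_neg (hv : padicValRat p q < 0) :
    (p : ℝ) ≤ ‖(q : ℚ_[p])‖ := by
  have hq : q ≠ 0 := by rintro rfl; simp at hv
  rw [Padic.norm_ratCast_eq_zpow hq]
  have hp : (1 : ℝ) ≤ p := by exact_mod_cast (Fact.out : p.Prime).one_le
  simpa using zpow_le_zpow_right₀ hp (show (1 : ℤ) ≤ -padicValRat p q by omega)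

end Padic

theorem stmt_4_general (p : ℕ) [Fact p.Prime] (b : ℕ → ℚ)
    (hbne : ∀ n, b n ≠ 0)
    (heven : ∀ n : ℕ, 1 ≤ n → padicValRat p (b (2 * n)) = 0)
    (hodd : ∀ n : ℕ, padicValRat p (b (2 * n + 1)) < 0)
    (A B : ℕ → ℚ)
    (hA0 : A 0 = b 0) (hA1 : A 1 = b 1 * b 0 + 1)
    (hA : ∀ n, A (n + 2) = b (n + 2) * A (n + 1) + A n)
    (hB0 : B 0 = 1) (hB1 : B 1 = b 1)
    (hB : ∀ n, B (n + 2) = b (n + 2) * B (n + 1) + B n) :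
    ∃ L : ℚ_[p], Filter.Tendsto (fun n => ((A n / B n : ℚ) : ℚ_[p])) Filter.atTop (nhds L) := by
  have hp : (1 : ℝ) < p := by exact_mod_cast (Fact.out : p.Prime).one_lt
  have hdet := continuant_det (c := fun n => (b n : ℚ_[p])) (α := fun n => (A n : ℚ_[p]))
    (β := fun n => (B n : ℚ_[p])) (by simp [hA0]) (by simp [hA1]) (by simp [hA])
    (by simp [hB0]) (by simp [hB1]) (by simp [hB])
  have hgrowth := pow_succ_le_norm_mul_norm_continuant_succ (c := fun n => (b n : ℚ_[p]))
    (β := fun n => (B n : ℚ_[p])) hp (by simp [hB]) (by simp [hB0])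
    (by simpa [hB1] using Padic.le_norm_ratCast_of_padicValRat_neg (p := p) (hodd 0))
    (fun n => Padic.le_norm_ratCast_of_padicValRat_neg (hodd n))
    (fun n hn => Padic.norm_ratCast_eq_one (hbne _) (heven n hn))
  refine cauchySeq_tendsto_of_complete ?_
  simpa using cauchySeq_div_of_det_of_pow_le hp hdet hgrowth

/-- Let `(b n)` be a sequence of nonzero `p`-adic fractions with
`v_p(b (2n)) = 0` for `n ≥ 1` and `v_p(b (2n+1)) < 0` for `n ≥ 0`.  The sequences
`A`, `B` are the numerators and denominators of the convergents, i.e. they satisfy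
`A (-1) = 1, A 0 = b 0, A n = b n * A (n-1) + A (n-2)` and
`B (-1) = 0, B 0 = 1, B n = b n * B (n-1) + B (n-2)` (the `-1`-indexed values are
absorbed in the stated values of `A 0, A 1, B 0, B 1`).  Then the continued fraction
`[b 0, b 1, …]` converges in `ℚ_p`: the convergents `A n / B n` tend to a `p`-adic number. -/
theorem stmt_4 (p : ℕ) [Fact p.Prime] (hp : p ≠ 2) (b : ℕ → ℚ)
    (hbfrac : ∀ n, IsPadicFrac p (b n)) (hbne : ∀ n, b n ≠ 0)
    (heven : ∀ n : ℕ, 1 ≤ n → padicValRat p (b (2 * n)) = 0)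
    (hodd : ∀ n : ℕ, padicValRat p (b (2 * n + 1)) < 0)
    (A B : ℕ → ℚ)
    (hA0 : A 0 = b 0) (hA1 : A 1 = b 1 * b 0 + 1)
    (hA : ∀ n, A (n + 2) = b (n + 2) * A (n + 1) + A n)
    (hB0 : B 0 = 1) (hB1 : B 1 = b 1)
    (hB : ∀ n, B (n + 2) = b (n + 2) * B (n + 1) + B n) :
    ∃ L : ℚ_[p], Filter.Tendsto (fun n => ((A n / B n : ℚ) : ℚ_[p])) Filter.atTop (nhds L) :=
  stmt_4_general p b hbne heven hodd A B hA0 hA1 hA hB0 hB1 hB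
end

section
/- Let p be an odd prime and let (b_n)_{n≥0} be a sequence of p-adic fractions such that b_n ≠ 0 and v_p(b_n) + v_p(b_{n+1}) < 0 for all n ≥ 1. Then the continued fraction [b_0, b_1, b_2, …] converges in ℚ_p, i.e., the sequence of convergents A_n/B_n converges to a p-adic number. -/
/-!
The denominators satisfy `B (n + 2) = b (n + 2) * B (n + 1) + B n`. Since
`‖b (n + 1)‖ * ‖b (n + 2)‖ ≥ p > 1`, the first summand strictly dominates in the ultrametric
norm, so `‖B (n + 1)‖ = ‖B n‖ * ‖b (n + 1)‖` and `‖B n * B (n + 1)‖` grows at least like `p ^ n`.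
By the determinant identity `A (n + 1) * B n - A n * B (n + 1) = (-1) ^ n`, consecutive
convergents are at distance `‖B n * B (n + 1)‖⁻¹`, so the convergents form a Cauchy sequence.
-/

theorem continuant_det_eq_neg_one_pow {R : Type*} [CommRing R] {b A B : ℕ → R}
    (hA0 : A 0 = b 0) (hA1 : A 1 = b 1 * b 0 + 1) (hA : ∀ n, A (n + 2) = b (n + 2) * A (n + 1) + A n)
    (hB0 : B 0 = 1) (hB1 : B 1 = b 1) (hB : ∀ n, B (n + 2) = b (n + 2) * B (n + 1) + B n)
    (n : ℕ) : A (n + 1) * B n - A n * B (n + 1) = (-1) ^ n := by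
  induction n with
  | zero => rw [hA0, hA1, hB0, hB1]; ring
  | succ n ih =>
    rw [hA n, hB n, pow_succ]
    linear_combination (-1 : R) * ih

section Ultrametric

variable {K : Type*} [NormedField K] [IsUltrametricDist K] {b A B : ℕ → K}

theorem continuant_ne_zero_and_norm_succ (hB0 : B 0 = 1) (hB1 : B 1 = b 1)
    (hB : ∀ n, B (n + 2) = b (n + 2) * B (n + 1) + B n)
    (hb : ∀ n, 1 < ‖b (n + 1)‖ * ‖b (n + 2)‖) (n : ℕ) :
    B n ≠ 0 ∧ ‖B (n + 1)‖ = ‖B n‖ * ‖b (n + 1)‖ := by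
  induction n with
  | zero => simp [hB0, hB1]
  | succ n ih =>
    obtain ⟨hBn, hnorm⟩ := ih
    have hbn : b (n + 1) ≠ 0 := by
      rintro h
      have := hb n
      norm_num [h] at this
    have hBn_pos : 0 < ‖B n‖ := norm_pos_iff.mpr hBn
    have hdominant : ‖B n‖ < ‖b (n + 2) * B (n + 1)‖ := by
      calc ‖B n‖ = ‖B n‖ * 1 := (mul_one _).symm
        _ < ‖B n‖ * (‖b (n + 1)‖ * ‖b (n + 2)‖) := mul_lt_mul_of_pos_left (hb n) hBn_pos
        _ = ‖b (n + 2) * B (n + 1)‖ := by rw [norm_mul, hnorm]; ring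
    refine ⟨by rw [← norm_ne_zero_iff, hnorm]; positivity, ?_⟩
    rw [hB, IsUltrametricDist.norm_add_eq_max_of_norm_ne_norm hdominant.ne',
      max_eq_left hdominant.le, norm_mul, mul_comm]

theorem pow_mul_norm_le_norm_continuant_mul (hB0 : B 0 = 1) (hB1 : B 1 = b 1)
    (hB : ∀ n, B (n + 2) = b (n + 2) * B (n + 1) + B n) {c : ℝ} (hc : 1 < c)
    (hb : ∀ n, c ≤ ‖b (n + 1)‖ * ‖b (n + 2)‖) (n : ℕ) :
    c ^ n * ‖b 1‖ ≤ ‖B n * B (n + 1)‖ := by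
  have hnorm := fun n ↦
    (continuant_ne_zero_and_norm_succ hB0 hB1 hB (fun n ↦ hc.trans_le (hb n)) n).2
  induction n with
  | zero => simp [hB0, hB1]
  | succ n ih =>
    calc c ^ (n + 1) * ‖b 1‖ = c ^ n * ‖b 1‖ * c := by ring
      _ ≤ ‖B n * B (n + 1)‖ * (‖b (n + 1)‖ * ‖b (n + 2)‖) :=
        mul_le_mul ih (hb n) (by linarith) (norm_nonneg _)
      _ = ‖B (n + 1) * B (n + 2)‖ := by rw [norm_mul, norm_mul, hnorm (n + 1), hnorm n]; ring

theorem cauchySeq_convergents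
    (hA0 : A 0 = b 0) (hA1 : A 1 = b 1 * b 0 + 1) (hA : ∀ n, A (n + 2) = b (n + 2) * A (n + 1) + A n)
    (hB0 : B 0 = 1) (hB1 : B 1 = b 1) (hB : ∀ n, B (n + 2) = b (n + 2) * B (n + 1) + B n)
    {c : ℝ} (hc : 1 < c) (hb : ∀ n, c ≤ ‖b (n + 1)‖ * ‖b (n + 2)‖) :
    CauchySeq fun n ↦ A n / B n := by
  have hB_ne n :=
    (continuant_ne_zero_and_norm_succ hB0 hB1 hB (fun n ↦ hc.trans_le (hb n)) n).1
  have hb1 : 0 < ‖b 1‖ := by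
    rw [← hB1, norm_pos_iff]
    exact hB_ne 1
  refine cauchySeq_of_le_geometric c⁻¹ ‖b 1‖⁻¹ (inv_lt_one_of_one_lt₀ hc) fun n ↦ ?_
  have hdiff : A (n + 1) / B (n + 1) - A n / B n = (-1) ^ n / (B n * B (n + 1)) := by
    field_simp [hB_ne n, hB_ne (n + 1)]
    linear_combination continuant_det_eq_neg_one_pow hA0 hA1 hA hB0 hB1 hB n
  calc dist (A n / B n) (A (n + 1) / B (n + 1))
      = ‖B n * B (n + 1)‖⁻¹ := by rw [dist_comm, dist_eq_norm, hdiff]; simp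
    _ ≤ (c ^ n * ‖b 1‖)⁻¹ :=
      inv_anti₀ (by positivity) (pow_mul_norm_le_norm_continuant_mul hB0 hB1 hB hc hb n)
    _ = ‖b 1‖⁻¹ * c⁻¹ ^ n := by rw [mul_inv, inv_pow, mul_comm]

end Ultrametric

theorem Padic.le_norm_mul_of_padicValRat_add_neg {p : ℕ} [Fact p.Prime] {x y : ℚ}
    (hx : x ≠ 0) (hy : y ≠ 0) (h : padicValRat p x + padicValRat p y < 0) :
    (p : ℝ) ≤ ‖(x : ℚ_[p])‖ * ‖(y : ℚ_[p])‖ := by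
  have hp : (1 : ℝ) < p := mod_cast (Fact.out : p.Prime).one_lt
  rw [← norm_mul, ← Rat.cast_mul, Padic.eq_padicNorm,
    padicNorm.eq_zpow_of_nonzero (mul_ne_zero hx hy), padicValRat.mul hx hy]
  push_cast
  calc (p : ℝ) = (p : ℝ) ^ (1 : ℤ) := (zpow_one _).symm
    _ ≤ _ := zpow_le_zpow_right₀ hp.le (by omega)

theorem stmt_5_general (p : ℕ) [Fact p.Prime] (b : ℕ → ℚ)
    (hbne : ∀ n : ℕ, 1 ≤ n → b n ≠ 0)
    (hval : ∀ n : ℕ, 1 ≤ n → padicValRat p (b n) + padicValRat p (b (n + 1)) < 0)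
    (A B : ℕ → ℚ)
    (hA0 : A 0 = b 0) (hA1 : A 1 = b 1 * b 0 + 1)
    (hA : ∀ n, A (n + 2) = b (n + 2) * A (n + 1) + A n)
    (hB0 : B 0 = 1) (hB1 : B 1 = b 1)
    (hB : ∀ n, B (n + 2) = b (n + 2) * B (n + 1) + B n) :
    ∃ L : ℚ_[p], Filter.Tendsto (fun n => ((A n / B n : ℚ) : ℚ_[p])) Filter.atTop (nhds L) := by
  have hp : (1 : ℝ) < p := mod_cast (Fact.out : p.Prime).one_lt
  have hb n : (p : ℝ) ≤ ‖((b (n + 1) : ℚ) : ℚ_[p])‖ * ‖((b (n + 2) : ℚ) : ℚ_[p])‖ :=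
    Padic.le_norm_mul_of_padicValRat_add_neg (hbne _ (by omega)) (hbne _ (by omega))
      (hval (n + 1) (by omega))
  have hcauchy := cauchySeq_convergents (K := ℚ_[p]) (b := fun n ↦ (b n : ℚ_[p]))
    (A := fun n ↦ (A n : ℚ_[p])) (B := fun n ↦ (B n : ℚ_[p]))
    (by simp [hA0]) (by simp [hA1]) (fun n ↦ by simp [hA n]) (by simp [hB0]) (by simp [hB1])
    (fun n ↦ by simp [hB n]) hp hb
  simp only [Rat.cast_div]
  exact cauchySeq_tendsto_of_complete hcauchy

/-- Let `(b n)` be a sequence of `p`-adic fractions with `b n ≠ 0` and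
`v_p(b n) + v_p(b (n+1)) < 0` for all `n ≥ 1`.  The sequences `A`, `B` are the
numerators and denominators of the convergents, i.e. they satisfy
`A (-1) = 1, A 0 = b 0, A n = b n * A (n-1) + A (n-2)` and
`B (-1) = 0, B 0 = 1, B n = b n * B (n-1) + B (n-2)` (the `-1`-indexed values are
absorbed in the stated values of `A 0, A 1, B 0, B 1`).  Then the continued fraction
`[b 0, b 1, …]` converges in `ℚ_p`: the convergents `A n / B n` tend to a `p`-adic number. -/
theorem stmt_5 (p : ℕ) [Fact p.Prime] (hp : p ≠ 2) (b : ℕ → ℚ)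
    (hbfrac : ∀ n, IsPadicFrac p (b n))
    (hbne : ∀ n : ℕ, 1 ≤ n → b n ≠ 0)
    (hval : ∀ n : ℕ, 1 ≤ n → padicValRat p (b n) + padicValRat p (b (n + 1)) < 0)
    (A B : ℕ → ℚ)
    (hA0 : A 0 = b 0) (hA1 : A 1 = b 1 * b 0 + 1)
    (hA : ∀ n, A (n + 2) = b (n + 2) * A (n + 1) + A n)
    (hB0 : B 0 = 1) (hB1 : B 1 = b 1)
    (hB : ∀ n, B (n + 2) = b (n + 2) * B (n + 1) + B n) :
    ∃ L : ℚ_[p], Filter.Tendsto (fun n => ((A n / B n : ℚ) : ℚ_[p])) Filter.atTop (nhds L) :=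
  stmt_5_general p b hbne hval A B hA0 hA1 hA hB0 hB1 hB
end

section
/- Let p be an odd prime and let α₀ ∈ ℚ_p be a quadratic irrational with conjugate ᾱ₀. Let (α_n), (b_n) be the sequences produced by Algorithm (4) applied to α₀, and assume the expansion is periodic. Then the expansion is purely periodic if and only if ‖α₀‖_p > 1 and ‖ᾱ₀‖_p ≤ 1. -/
/-- `b` is Browkin's integral floor `s α`: the unique `p`-adic fraction with
`|b| < p/2` and `‖α - b‖_p < 1`. -/
def IsIntFloor (p : ℕ) [Fact p.Prime] (α : ℚ_[p]) (b : ℚ) : Prop :=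
  IsPadicFrac p b ∧ |b| < (p : ℚ) / 2 ∧ ‖α - (b : ℚ_[p])‖ < 1

/-- `b` is Browkin's fractional floor `t α`: the unique `p`-adic fraction with
`|b| < 1/2` and `‖α - b‖_p ≤ 1`. -/
def IsFracFloor (p : ℕ) [Fact p.Prime] (α : ℚ_[p]) (b : ℚ) : Prop :=
  IsPadicFrac p b ∧ |b| < 1 / 2 ∧ ‖α - (b : ℚ_[p])‖ ≤ 1

/-- Algorithm (4): `b n = t (α n)` for even `n`, `b n = s (α n)` for odd `n`,
and `α (n + 1) = (α n - b n)⁻¹`. -/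
def Alg4 (p : ℕ) [Fact p.Prime] (α : ℕ → ℚ_[p]) (b : ℕ → ℚ) : Prop :=
  (∀ n, Even n → IsFracFloor p (α n) (b n)) ∧
  (∀ n, Odd n → IsIntFloor p (α n) (b n)) ∧
  ∀ n, α (n + 1) = (α n - (b n : ℚ_[p]))⁻¹

/-!
Run the conjugate sequence `γ n = conj (α n)` through the same recursion
`γ (n + 1) = (γ n - b n)⁻¹`. Two sequences with the same digits drift apart: since the floors
approximate to within `≤ 1` resp. `< 1`, `‖α n - γ n‖` never shrinks and grows by a factor `p`
at every odd step. Hence the digits determine `α 0`, and in a purely periodic expansion some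
`γ m` must have norm `< 1`, for otherwise `‖γ n - b n‖ ≤ 1` throughout and `‖α n - γ n‖` would
grow along a period.

If `‖α n‖ > 1` at even `n` and `γ n` is within the error bound of the floor used at step `n`,
the ultrametric inequality gives `‖γ (n + 1)‖ = ‖α n‖⁻¹`, so the bound propagates. Started
from `‖γ m‖ < 1` it reaches a multiple of the period, where it says `‖ᾱ₀‖ ≤ 1`. Conversely, if
`‖α₀‖ > 1 ≥ ‖ᾱ₀‖` the bound holds for all `n`, so `b n` is recovered as the floor of
`-(γ (n + 1))⁻¹`; this carries the periodicity of `γ` back from the periodic tail to `n = 0`.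
-/

open Function IsUltrametricDist

section Ultrametric

variable {S : Type*} [SeminormedAddCommGroup S] [IsUltrametricDist S]

lemma norm_sub_le_max (x y : S) : ‖x - y‖ ≤ max ‖x‖ ‖y‖ := by
  simpa only [sub_eq_add_neg, norm_neg] using norm_add_le_max x (-y)

lemma norm_sub_eq_of_norm_sub_lt {x y c : S} (hxc : ‖x - c‖ < ‖x‖) (hy : ‖y‖ < ‖x‖) :
    ‖y - c‖ = ‖x‖ := by
  have hc : ‖c‖ = ‖x‖ := by
    have h := norm_add_eq_max_of_norm_ne_norm (x := x) (y := -(x - c))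
      (by rw [norm_neg]; exact hxc.ne')
    rwa [neg_sub, add_sub_cancel, norm_sub_rev, max_eq_left hxc.le] at h
  rw [sub_eq_add_neg, norm_add_eq_max_of_norm_ne_norm (by rw [norm_neg, hc]; exact hy.ne),
    norm_neg, hc, max_eq_right hy.le]

end Ultrametric

lemma norm_inv_sub_sub_inv_sub {K : Type*} [NormedField K] {x y c : K} (hx : x ≠ c)
    (hy : y ≠ c) : ‖(x - c)⁻¹ - (y - c)⁻¹‖ = ‖x - y‖ / (‖x - c‖ * ‖y - c‖) := by
  rw [inv_sub_inv (sub_ne_zero.2 hx) (sub_ne_zero.2 hy), norm_div, norm_mul,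
    sub_sub_sub_cancel_right, norm_sub_rev]

variable {p : ℕ}

lemma IsPadicFrac.sub_s8 {a b : ℚ} (ha : IsPadicFrac p a) (hb : IsPadicFrac p b) :
    IsPadicFrac p (a - b) := by
  obtain ⟨m, z, hz⟩ := ha
  obtain ⟨n, w, hw⟩ := hb
  refine ⟨m + n, z * p ^ n - w * p ^ m, ?_⟩
  push_cast
  linear_combination (p : ℚ) ^ n * hz - (p : ℚ) ^ m * hw

variable [Fact p.Prime]

lemma norm_le_inv_prime_of_norm_lt_one {x : ℚ_[p]} (h : ‖x‖ < 1) : ‖x‖ ≤ (p : ℝ)⁻¹ := by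
  simpa using (Padic.norm_le_pow_iff_norm_lt_pow_add_one x (-1)).2 (by simpa using h)

namespace IsPadicFrac

variable {a : ℚ}

lemma div_prime (ha : IsPadicFrac p a) : IsPadicFrac p (a / p) := by
  obtain ⟨m, z, hz⟩ := ha
  have hp : (p : ℚ) ≠ 0 := by exact_mod_cast (Fact.out : p.Prime).ne_zero
  exact ⟨m + 1, z, by rw [← hz]; field_simp; ring⟩

lemma exists_eq_intCast (ha : IsPadicFrac p a) (hle : ‖(a : ℚ_[p])‖ ≤ 1) : ∃ z : ℤ, a = z := by
  obtain ⟨m, z, hz⟩ := ha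
  have hp : (p : ℚ) ^ m ≠ 0 := pow_ne_zero _ (by exact_mod_cast (Fact.out : p.Prime).ne_zero)
  obtain ⟨w, rfl⟩ : (p ^ m : ℤ) ∣ z := by
    rw [← Padic.norm_int_le_pow_iff_dvd]
    have hz' : ((z : ℚ) : ℚ_[p]) = a * (p : ℚ_[p]) ^ m := by rw [← hz]; push_cast; ring
    rw [← Rat.cast_intCast, hz', norm_mul, norm_pow, Padic.norm_p, zpow_neg, zpow_natCast,
      inv_pow]
    exact mul_le_of_le_one_left (by positivity) hle
  refine ⟨w, mul_right_cancel₀ hp ?_⟩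
  rw [hz]
  push_cast
  ring

lemma eq_zero (ha : IsPadicFrac p a) (hle : ‖(a : ℚ_[p])‖ ≤ 1) (habs : |a| < 1) : a = 0 := by
  obtain ⟨z, rfl⟩ := ha.exists_eq_intCast hle
  exact_mod_cast Int.abs_lt_one_iff.1 (by exact_mod_cast habs)

end IsPadicFrac

lemma IsFracFloor.unique {x : ℚ_[p]} {b b' : ℚ} (h : IsFracFloor p x b)
    (h' : IsFracFloor p x b') : b = b' := by
  refine sub_eq_zero.1 ((h.1.sub_s8 h'.1).eq_zero ?_ ?_)
  · rw [Rat.cast_sub, ← sub_sub_sub_cancel_left _ _ x]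
    exact (norm_sub_le_max _ _).trans (max_le h'.2.2 h.2.2)
  · linarith [abs_sub b b', h.2.1, h'.2.1]

lemma IsIntFloor.unique {x : ℚ_[p]} {b b' : ℚ} (h : IsIntFloor p x b)
    (h' : IsIntFloor p x b') : b = b' := by
  have hp : (0 : ℚ) < p := by exact_mod_cast (Fact.out : p.Prime).pos
  have hlt : ‖((b - b' : ℚ) : ℚ_[p])‖ < 1 := by
    rw [Rat.cast_sub, ← sub_sub_sub_cancel_left _ _ x]
    exact (norm_sub_le_max _ _).trans_lt (max_lt h'.2.2 h.2.2)
  -- `b - b'` is divisible by `p` and smaller than `p` in absolute value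
  have hdiv := (h.1.sub_s8 h'.1).div_prime.eq_zero ?_ ?_
  · simpa [hp.ne', sub_eq_zero] using hdiv
  · rw [Rat.cast_div, norm_div, Rat.cast_natCast, Padic.norm_p, div_inv_eq_mul]
    have hp' : (0 : ℝ) < p := by exact_mod_cast hp
    calc ‖((b - b' : ℚ) : ℚ_[p])‖ * p ≤ (p : ℝ)⁻¹ * p := by
          gcongr; exact norm_le_inv_prime_of_norm_lt_one hlt
      _ = 1 := inv_mul_cancel₀ hp'.ne'
  · rw [abs_div, Nat.abs_cast, div_lt_one hp]
    linarith [abs_sub b b', h.2.1, h'.2.1]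

def FloorBound (p : ℕ) [Fact p.Prime] (n : ℕ) (y : ℚ_[p]) : Prop :=
  ‖y‖ ≤ 1 ∧ (Odd n → ‖y‖ < 1)

lemma FloorBound.of_norm_lt_one {n : ℕ} {y : ℚ_[p]} (h : ‖y‖ < 1) : FloorBound p n y :=
  ⟨h.le, fun _ => h⟩

lemma FloorBound.neg {n : ℕ} {y : ℚ_[p]} (h : FloorBound p n y) : FloorBound p n (-y) := by
  rwa [FloorBound, norm_neg]

lemma periodic_of_recursion {x : ℕ → ℚ_[p]} {b : ℕ → ℚ} (hx : ∀ n, x (n + 1) = (x n - b n)⁻¹)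
    {K : ℕ} (hb : Periodic b K) (h0 : x K = x 0) : Periodic x K := by
  intro n
  induction n with
  | zero => simpa using h0
  | succ n ih => rw [add_right_comm, hx, hx, ih, hb]

namespace Alg4

variable {α γ : ℕ → ℚ_[p]} {b : ℕ → ℚ}

lemma floorBound (h : Alg4 p α b) (n : ℕ) : FloorBound p n (α n - b n) := by
  rcases Nat.even_or_odd n with hn | hn
  · exact ⟨(h.1 n hn).2.2, fun ho => absurd hn (Nat.not_even_iff_odd.2 ho)⟩
  · exact FloorBound.of_norm_lt_one (h.2.1 n hn).2.2

lemma digit_eq (h : Alg4 p α b) {m n : ℕ} (hmn : Even m ↔ Even n) {x : ℚ_[p]}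
    (hm : FloorBound p m (x - b m)) (hn : FloorBound p n (x - b n)) : b m = b n := by
  rcases Nat.even_or_odd m with he | ho
  · have he' := hmn.1 he
    exact IsFracFloor.unique ⟨(h.1 m he).1, (h.1 m he).2.1, hm.1⟩
      ⟨(h.1 n he').1, (h.1 n he').2.1, hn.1⟩
  · have ho' : Odd n := Nat.not_even_iff_odd.1 fun he => Nat.not_even_iff_odd.2 ho (hmn.2 he)
    exact IsIntFloor.unique ⟨(h.2.1 m ho).1, (h.2.1 m ho).2.1, hm.2 ho⟩
      ⟨(h.2.1 n ho').1, (h.2.1 n ho').2.1, hn.2 ho'⟩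

lemma shift (h : Alg4 p α b) {E : ℕ} (hE : Even E) :
    Alg4 p (fun n => α (n + E)) (fun n => b (n + E)) :=
  ⟨fun n hn => h.1 _ (hn.add hE), fun n hn => h.2.1 _ (hn.add_even hE),
    fun n => by simpa only [add_right_comm n 1 E] using h.2.2 (n + E)⟩

lemma one_le_norm_of_odd (h : Alg4 p α b) (hne : ∀ n, α n ≠ b n) {n : ℕ} (hn : Odd n) :
    1 ≤ ‖α n‖ := by
  obtain ⟨k, rfl⟩ := hn
  rw [h.2.2, norm_inv, one_le_inv₀ (norm_pos_iff.2 (sub_ne_zero.2 (hne _)))]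
  exact (h.floorBound _).1

lemma one_lt_norm_of_even_of_ne_zero (h : Alg4 p α b) (hne : ∀ n, α n ≠ b n) {n : ℕ}
    (hn : Even n) (hn0 : n ≠ 0) : 1 < ‖α n‖ := by
  obtain ⟨n, rfl⟩ := Nat.exists_eq_succ_of_ne_zero hn0
  rw [h.2.2, norm_inv, one_lt_inv₀ (norm_pos_iff.2 (sub_ne_zero.2 (hne _)))]
  exact (h.floorBound n).2 (Nat.not_even_iff_odd.1 (Nat.even_add_one.1 hn))

lemma one_lt_norm_of_even (h : Alg4 p α b) (hne : ∀ n, α n ≠ b n) (h0 : 1 < ‖α 0‖) {n : ℕ}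
    (hn : Even n) : 1 < ‖α n‖ := by
  rcases eq_or_ne n 0 with rfl | hn0
  · exact h0
  · exact h.one_lt_norm_of_even_of_ne_zero hne hn hn0

theorem pow_mul_norm_sub_le (h : Alg4 p α b) (hne : ∀ n, α n ≠ b n)
    (hγ : ∀ n, γ (n + 1) = (γ n - b n)⁻¹) (hγne : ∀ n, γ n ≠ b n)
    (hγle : ∀ n, ‖γ n - b n‖ ≤ 1) (n : ℕ) :
    (p : ℝ) ^ n * ‖α 0 - γ 0‖ ≤ ‖α (2 * n) - γ (2 * n)‖ := by
  have hstep : ∀ n, ‖α n - γ n‖ ≤ ‖α n - b n‖ * ‖α (n + 1) - γ (n + 1)‖ := fun n => by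
    have hA := norm_pos_iff.2 (sub_ne_zero.2 (hne n))
    have hG := norm_pos_iff.2 (sub_ne_zero.2 (hγne n))
    rw [h.2.2, hγ, norm_inv_sub_sub_inv_sub (hne n) (hγne n)]
    calc ‖α n - γ n‖ ≤ ‖α n - γ n‖ / ‖γ n - b n‖ := le_div_self (norm_nonneg _) hG (hγle n)
      _ = _ := by field_simp
  have hp : (0 : ℝ) < p := by exact_mod_cast (Fact.out : p.Prime).pos
  induction n with
  | zero => simp
  | succ n ih =>
    have hodd : ‖α (2 * n + 1) - b (2 * n + 1)‖ ≤ (p : ℝ)⁻¹ :=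
      norm_le_inv_prime_of_norm_lt_one ((h.floorBound _).2 (odd_two_mul_add_one n))
    calc (p : ℝ) ^ (n + 1) * ‖α 0 - γ 0‖ = p * ((p : ℝ) ^ n * ‖α 0 - γ 0‖) := by ring
      _ ≤ p * ‖α (2 * n) - γ (2 * n)‖ := by gcongr
      _ ≤ p * (‖α (2 * n) - b (2 * n)‖ * (‖α (2 * n + 1) - b (2 * n + 1)‖ *
          ‖α (2 * n + 2) - γ (2 * n + 2)‖)) := by
        gcongr
        exact (hstep _).trans (mul_le_mul_of_nonneg_left (hstep _) (norm_nonneg _))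
      _ ≤ p * (1 * ((p : ℝ)⁻¹ * ‖α (2 * n + 2) - γ (2 * n + 2)‖)) := by
        gcongr
        exact (h.floorBound _).1
      _ = ‖α (2 * (n + 1)) - γ (2 * (n + 1))‖ := by field_simp; ring_nf

theorem head_eq {α' : ℕ → ℚ_[p]} (h : Alg4 p α b) (h' : Alg4 p α' b) (hne : ∀ n, α n ≠ b n)
    (hne' : ∀ n, α' n ≠ b n) : α 0 = α' 0 := by
  by_contra hne0
  have hpos : 0 < ‖α 0 - α' 0‖ := norm_pos_iff.2 (sub_ne_zero.2 hne0)
  obtain ⟨n, hn⟩ := pow_unbounded_of_one_lt ‖α 0 - α' 0‖⁻¹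
    (by exact_mod_cast (Fact.out : p.Prime).one_lt : (1 : ℝ) < p)
  have hbound : ‖α (2 * n) - α' (2 * n)‖ ≤ 1 := by
    rw [← sub_sub_sub_cancel_right _ _ (b (2 * n) : ℚ_[p])]
    exact (norm_sub_le_max _ _).trans (max_le (h.floorBound _).1 (h'.floorBound _).1)
  have := (h.pow_mul_norm_sub_le hne h'.2.2 hne' (fun n => (h'.floorBound n).1) n).trans hbound
  rw [inv_lt_iff_one_lt_mul₀ hpos] at hn
  linarith

end Alg4

section ConjPair

variable {α₀ : ℚ_[p]} {r : ℚ}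

lemma ratCast_eq_and_eq_of_add_mul_eq (hirr : ∀ q : ℚ, α₀ ≠ q) {a c a' c' : ℚ}
    (h : (a : ℚ_[p]) + c * α₀ = a' + c' * α₀) : a = a' ∧ c = c' := by
  obtain rfl : c = c' := by
    by_contra hc
    apply hirr ((a' - a) / (c - c'))
    rw [Rat.cast_div, eq_div_iff (by exact_mod_cast sub_ne_zero.2 hc)]
    push_cast
    linear_combination h
  exact ⟨by exact_mod_cast add_right_cancel h, rfl⟩

/-- `x ∈ ℚ(α₀) \ ℚ` and `y` is its Galois conjugate, the conjugate of `α₀` being `r - α₀`. -/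
def IsConjPair (α₀ : ℚ_[p]) (r : ℚ) (x y : ℚ_[p]) : Prop :=
  ∃ a c : ℚ, c ≠ 0 ∧ x = a + c * α₀ ∧ y = a + c * (r - α₀)

namespace IsConjPair

variable {x y y' : ℚ_[p]}

lemma self : IsConjPair α₀ r α₀ (r - α₀) := ⟨0, 1, one_ne_zero, by simp, by simp⟩

lemma left_ne_ratCast (hirr : ∀ q : ℚ, α₀ ≠ q) (h : IsConjPair α₀ r x y) (q : ℚ) : x ≠ q := by
  obtain ⟨a, c, hc, rfl, -⟩ := h
  intro hq
  exact hc (ratCast_eq_and_eq_of_add_mul_eq hirr (c' := 0) (by simpa using hq)).2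

lemma right_ne_ratCast (hirr : ∀ q : ℚ, α₀ ≠ q) (h : IsConjPair α₀ r x y) (q : ℚ) :
    y ≠ q := by
  obtain ⟨a, c, hc, -, rfl⟩ := h
  intro hq
  refine hc (neg_eq_zero.1 (ratCast_eq_and_eq_of_add_mul_eq hirr (a := a + c * r) (a' := q)
    (c' := 0) ?_).2)
  rw [← hq]; push_cast; ring

lemma left_ne_right (hirr : ∀ q : ℚ, α₀ ≠ q) (h : IsConjPair α₀ r x y) : x ≠ y := by
  obtain ⟨a, c, hc, rfl, rfl⟩ := h
  intro hxy
  refine hc (self_eq_neg.1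
    (ratCast_eq_and_eq_of_add_mul_eq hirr (a := a) (a' := a + c * r) ?_).2)
  rw [hxy]; push_cast; ring

lemma right_unique (hirr : ∀ q : ℚ, α₀ ≠ q) (h : IsConjPair α₀ r x y)
    (h' : IsConjPair α₀ r x y') : y = y' := by
  obtain ⟨a, c, -, rfl, rfl⟩ := h
  obtain ⟨a', c', -, hx, rfl⟩ := h'
  obtain ⟨rfl, rfl⟩ := ratCast_eq_and_eq_of_add_mul_eq hirr hx
  rfl

lemma inv_sub (hirr : ∀ q : ℚ, α₀ ≠ q) {s : ℚ} (hquad : α₀ ^ 2 = (r : ℚ_[p]) * α₀ + (s : ℚ_[p]))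
    (h : IsConjPair α₀ r x y) (q : ℚ) : IsConjPair α₀ r (x - q)⁻¹ (y - q)⁻¹ := by
  have hx := sub_ne_zero.2 (h.left_ne_ratCast hirr q)
  have hy := sub_ne_zero.2 (h.right_ne_ratCast hirr q)
  obtain ⟨a, c, hc, rfl, rfl⟩ := h
  -- the norm of `x - q` from `ℚ(α₀)` down to `ℚ`
  have hN : ((a : ℚ_[p]) + c * α₀ - q) * (a + c * (r - α₀) - q) =
      (((a - q) ^ 2 + (a - q) * c * r - c ^ 2 * s : ℚ) : ℚ_[p]) := by
    push_cast
    linear_combination (-(c : ℚ_[p]) ^ 2) * hquad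
  generalize ((a - q) ^ 2 + (a - q) * c * r - c ^ 2 * s : ℚ) = N at hN
  have hN0 : N ≠ 0 := by
    rintro hN0
    rw [hN0, Rat.cast_zero] at hN
    exact mul_ne_zero hx hy hN
  refine ⟨(a - q + c * r) / N, -c / N, div_ne_zero (neg_ne_zero.2 hc) hN0, ?_, ?_⟩ <;>
  · apply inv_eq_of_mul_eq_one_right
    push_cast
    field_simp
    linear_combination hN

end IsConjPair

end ConjPair

noncomputable def conjSeq (y₀ : ℚ_[p]) (b : ℕ → ℚ) : ℕ → ℚ_[p]
  | 0 => y₀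
  | n + 1 => (conjSeq y₀ b n - b n)⁻¹

def IsReducedPair (x y : ℚ_[p]) : Prop := 1 < ‖x‖ ∧ ‖y‖ ≤ 1

namespace Alg4

variable {α γ : ℕ → ℚ_[p]} {b : ℕ → ℚ} {α₀ : ℚ_[p]} {r : ℚ}

lemma isConjPair_conjSeq (h : Alg4 p α b) (hirr : ∀ q : ℚ, α₀ ≠ q) {s : ℚ}
    (hquad : α₀ ^ 2 = (r : ℚ_[p]) * α₀ + (s : ℚ_[p])) (h0 : α 0 = α₀) (n : ℕ) :
    IsConjPair α₀ r (α n) (conjSeq (r - α₀) b n) := by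
  induction n with
  | zero => exact h0 ▸ IsConjPair.self
  | succ n ih => rw [h.2.2]; exact ih.inv_sub hirr hquad _

lemma floorBound_succ (h : Alg4 p α b) (hne : ∀ n, α n ≠ b n) (h0 : 1 < ‖α 0‖)
    (hγ : ∀ n, γ (n + 1) = (γ n - b n)⁻¹) {n : ℕ} (hn : FloorBound p n (γ n)) :
    FloorBound p (n + 1) (γ (n + 1)) := by
  have hnorm : ‖α n - b n‖ < ‖α n‖ → ‖γ n‖ < ‖α n‖ → ‖γ (n + 1)‖ = ‖α n‖⁻¹ := fun hα hγn => by
    rw [hγ, norm_inv, norm_sub_eq_of_norm_sub_lt hα hγn]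
  rcases Nat.even_or_odd n with he | ho
  · have h1 := h.one_lt_norm_of_even hne h0 he
    refine FloorBound.of_norm_lt_one ?_
    rw [hnorm ((h.floorBound n).1.trans_lt h1) (hn.1.trans_lt h1)]
    exact inv_lt_one_of_one_lt₀ h1
  · have h1 := h.one_le_norm_of_odd hne ho
    refine ⟨?_, fun ho' => absurd ho' (Nat.not_odd_iff_even.2 ho.add_one)⟩
    rw [hnorm (((h.floorBound n).2 ho).trans_le h1) ((hn.2 ho).trans_le h1)]
    exact inv_le_one_of_one_le₀ h1

lemma floorBound_of_le (h : Alg4 p α b) (hne : ∀ n, α n ≠ b n) (h0 : 1 < ‖α 0‖)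
    (hγ : ∀ n, γ (n + 1) = (γ n - b n)⁻¹) {m : ℕ} (hm : FloorBound p m (γ m)) {n : ℕ}
    (hmn : m ≤ n) : FloorBound p n (γ n) := by
  induction n, hmn using Nat.le_induction with
  | base => exact hm
  | succ n _ ih => exact h.floorBound_succ hne h0 hγ ih

lemma exists_norm_lt_one (h : Alg4 p α b) (hne : ∀ n, α n ≠ b n)
    (hγ : ∀ n, γ (n + 1) = (γ n - b n)⁻¹) (hγne : ∀ n, γ n ≠ b n) (hαγ : α 0 ≠ γ 0) {k : ℕ}
    (hk : 1 ≤ k) (hαk : α (2 * k) = α 0) (hγk : γ (2 * k) = γ 0) : ∃ m, ‖γ m‖ < 1 := by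
  by_contra! hbig
  have hγle : ∀ n, ‖γ n - b n‖ ≤ 1 := fun n => by
    rw [← inv_inv (γ n - b n), ← hγ, norm_inv]
    exact inv_le_one_of_one_le₀ (hbig _)
  have hgrow := h.pow_mul_norm_sub_le hne hγ hγne hγle k
  rw [hαk, hγk] at hgrow
  have hpos : 0 < ‖α 0 - γ 0‖ := norm_pos_iff.2 (sub_ne_zero.2 hαγ)
  have hpk : 1 < (p : ℝ) ^ k :=
    one_lt_pow₀ (by exact_mod_cast (Fact.out : p.Prime).one_lt) (by omega)
  nlinarith

lemma digit_and_conj_eq (h : Alg4 p α b) (hγ : ∀ n, γ (n + 1) = (γ n - b n)⁻¹)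
    (hbnd : ∀ n, FloorBound p n (γ n)) {K n : ℕ} (hK : Even K)
    (heq : γ (n + 1 + K) = γ (n + 1)) : b (n + K) = b n ∧ γ (n + K) = γ n := by
  have hinv : ∀ j, γ j = b j + (γ (j + 1))⁻¹ := fun j => by rw [hγ, inv_inv]; ring
  -- `b j` is the floor of `-(γ (j + 1))⁻¹ = b j - γ j` used at step `j`
  have hdigit : b (n + K) = b n := by
    refine h.digit_eq (x := -(γ (n + 1))⁻¹) (by simp [Nat.even_add, hK]) ?_ ?_
    · rw [← heq, add_right_comm, show -(γ (n + K + 1))⁻¹ - b (n + K) = -γ (n + K) by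
        rw [hinv (n + K)]; ring]
      exact (hbnd _).neg
    · rw [show -(γ (n + 1))⁻¹ - b n = -γ n by rw [hinv n]; ring]
      exact (hbnd n).neg
  refine ⟨hdigit, ?_⟩
  rw [hinv, hinv n, add_right_comm, heq, hdigit]

theorem isReducedPair_of_periodic (h : Alg4 p α b) (hirr : ∀ q : ℚ, α₀ ≠ q)
    (hγ : ∀ n, γ (n + 1) = (γ n - b n)⁻¹) (hpair : ∀ n, IsConjPair α₀ r (α n) (γ n))
    {k : ℕ} (hk : 1 ≤ k) (hb : Periodic b k) :
    IsReducedPair (α 0) (γ 0) := by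
  have hirrα : ∀ n (q : ℚ), α n ≠ q := fun n => (hpair n).left_ne_ratCast hirr
  have hne : ∀ n, α n ≠ b n := fun n => hirrα n _
  have hK : Periodic b (2 * k) := two_mul k ▸ hb.add_period hb
  have hαK : α (2 * k) = α 0 := by
    have hs := h.shift (even_two_mul k)
    rw [funext hK] at hs
    simpa using hs.head_eq h (fun n => hirrα _ _) hne
  have hγK : γ (2 * k) = γ 0 := (hpair _).right_unique hirr (hαK ▸ hpair 0)
  have h0 : 1 < ‖α 0‖ := hαK ▸ h.one_lt_norm_of_even_of_ne_zero hne (even_two_mul k) (by omega)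
  obtain ⟨m, hm⟩ := h.exists_norm_lt_one hne hγ (fun n => (hpair n).right_ne_ratCast hirr _)
    ((hpair 0).left_ne_right hirr) hk hαK hγK
  have hbnd := h.floorBound_of_le hne h0 hγ (FloorBound.of_norm_lt_one hm)
    (Nat.le_mul_of_pos_right m (by omega : 0 < 2 * k))
  refine ⟨h0, ?_⟩
  simpa using (periodic_of_recursion hγ hK hγK).nat_mul_eq m ▸ hbnd.1

theorem periodic_of_isReducedPair (h : Alg4 p α b) (hirr : ∀ q : ℚ, α₀ ≠ q)
    (hγ : ∀ n, γ (n + 1) = (γ n - b n)⁻¹) (hpair : ∀ n, IsConjPair α₀ r (α n) (γ n))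
    (hred : IsReducedPair (α 0) (γ 0)) {h₀ k : ℕ} (hk : 1 ≤ k)
    (hb : ∀ n, h₀ ≤ n → b (n + k) = b n) : ∃ K, 1 ≤ K ∧ Periodic b K := by
  have hirrα : ∀ n (q : ℚ), α n ≠ q := fun n => (hpair n).left_ne_ratCast hirr
  have hne : ∀ n, α n ≠ b n := fun n => hirrα n _
  have hbnd : ∀ n, FloorBound p n (γ n) := fun n =>
    h.floorBound_of_le hne hred.1 hγ ⟨hred.2, (absurd · Nat.not_odd_zero)⟩ n.zero_le
  have hK : ∀ n, h₀ ≤ n → b (n + 2 * k) = b n := fun n hn => by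
    rw [two_mul, ← add_assoc, hb _ (by omega), hb n hn]
  have hαm : α (2 * h₀ + 2 * k) = α (2 * h₀) := by
    have hs := h.shift ((even_two_mul h₀).add (even_two_mul k))
    rw [show (fun n => b (n + (2 * h₀ + 2 * k))) = fun n => b (n + 2 * h₀) from
      funext fun n => by rw [← add_assoc]; exact hK _ (by omega)] at hs
    simpa using hs.head_eq (h.shift (even_two_mul h₀)) (fun n => hirrα _ _) (fun n => hirrα _ _)
  have hγm := (hpair _).right_unique hirr (hαm ▸ hpair (2 * h₀))
  have hdesc : ∀ n ≤ 2 * h₀, γ (n + 2 * k) = γ n := fun n hn =>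
    Nat.decreasingInduction (motive := fun j _ => γ (j + 2 * k) = γ j)
      (fun j _ ih => (h.digit_and_conj_eq hγ hbnd (even_two_mul k) ih).2) hγm hn
  refine ⟨2 * k, by omega, fun n => ?_⟩
  rcases lt_or_ge n (2 * h₀) with hn | hn
  · exact (h.digit_and_conj_eq hγ hbnd (even_two_mul k) (hdesc (n + 1) hn)).1
  · exact hK n (by omega)

end Alg4

theorem stmt_8_general (p : ℕ) [Fact p.Prime]
    (α₀ : ℚ_[p]) (hirr : ∀ q : ℚ, α₀ ≠ (q : ℚ_[p]))
    (r s : ℚ) (hquad : α₀ ^ 2 = (r : ℚ_[p]) * α₀ + (s : ℚ_[p]))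
    (α : ℕ → ℚ_[p]) (b : ℕ → ℚ) (h0 : α 0 = α₀) (halg : Alg4 p α b)
    (hper : ∃ h k : ℕ, 1 ≤ k ∧ ∀ n, h ≤ n → b (n + k) = b n) :
    (∃ k : ℕ, 1 ≤ k ∧ ∀ n, b (n + k) = b n) ↔
      (1 < ‖α₀‖ ∧ ‖(r : ℚ_[p]) - α₀‖ ≤ 1) := by
  have hpair := halg.isConjPair_conjSeq hirr hquad h0
  subst h0
  constructor
  · rintro ⟨k, hk, hb⟩
    exact halg.isReducedPair_of_periodic hirr (fun _ => rfl) hpair hk hb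
  · obtain ⟨h, k, hk, hb⟩ := hper
    exact fun hred => halg.periodic_of_isReducedPair hirr (fun _ => rfl) hpair hred hk hb

/-- For `α₀` a quadratic irrational (with `α₀² = r·α₀ + s`, conjugate `r - α₀`)
whose Algorithm (4) expansion is periodic, the expansion is purely periodic iff
`‖α₀‖_p > 1` and `‖ᾱ₀‖_p ≤ 1`. -/
theorem stmt_8 (p : ℕ) [Fact p.Prime] (hp : p ≠ 2)
    (α₀ : ℚ_[p]) (hirr : ∀ q : ℚ, α₀ ≠ (q : ℚ_[p]))
    (r s : ℚ) (hquad : α₀ ^ 2 = (r : ℚ_[p]) * α₀ + (s : ℚ_[p]))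
    (α : ℕ → ℚ_[p]) (b : ℕ → ℚ) (h0 : α 0 = α₀) (halg : Alg4 p α b)
    (hper : ∃ h k : ℕ, 1 ≤ k ∧ ∀ n, h ≤ n → b (n + k) = b n) :
    (∃ k : ℕ, 1 ≤ k ∧ ∀ n, b (n + k) = b n) ↔
      (1 < ‖α₀‖ ∧ ‖(r : ℚ_[p]) - α₀‖ ≤ 1) :=
  stmt_8_general p α₀ hirr r s hquad α b h0 halg hper
end

section
/- Let p be an odd prime and let (b_n)_{n≥1} be nonzero elements of ℚ_p with v_p(b_n) + v_p(b_{n+1}) < 0 for all n ≥ 1. Define B_0 = 1, B_1 = b_1 and B_n = b_n·B_{n−1} + B_{n−2} for n ≥ 2. Then for every n ≥ 1, B_n ≠ 0 and v_p(B_n) = v_p(b_1) + v_p(b_2) + ⋯ + v_p(b_n). -/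
/-!
The recurrence is dominated by its first term: the hypothesis on consecutive valuations says that
`b (n + 2) * B (n + 1)` has strictly smaller valuation than `B n`, so by the ultrametric inequality
`v(B (n + 2)) = v(b (n + 2)) + v(B (n + 1))`. A two-step induction, started at `B 0 = 1` (valuation
`0`, the empty sum), then gives `v(B n) = v(b 1) + ⋯ + v(b n)`.
-/

open Finset

namespace Padic

variable {p : ℕ} [Fact p.Prime]

theorem add_ne_zero_and_valuation_add_eq_of_lt {x y : ℚ_[p]} (hx : x ≠ 0)
    (h : x.valuation < y.valuation) : x + y ≠ 0 ∧ (x + y).valuation = x.valuation := by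
  have hp : (1 : ℝ) < p := Nat.one_lt_cast.2 (Fact.out : p.Prime).one_lt
  have hyx : ‖y‖ < ‖x‖ := by
    rcases eq_or_ne y 0 with rfl | hy
    · simpa using hx
    · rw [norm_eq_zpow_neg_valuation hx, norm_eq_zpow_neg_valuation hy]
      exact zpow_lt_zpow_right₀ hp (neg_lt_neg h)
  have hnorm : ‖x + y‖ = ‖x‖ := by
    rw [add_eq_max_of_ne hyx.ne', max_eq_left hyx.le]
  have hxy : x + y ≠ 0 := norm_ne_zero_iff.1 (hnorm ▸ norm_ne_zero_iff.2 hx)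
  refine ⟨hxy, neg_injective (zpow_right_injective₀ (by positivity) hp.ne' ?_)⟩
  simpa only [← norm_eq_zpow_neg_valuation hxy, ← norm_eq_zpow_neg_valuation hx] using hnorm

theorem mul_add_ne_zero_and_valuation_eq {b B₁ B₀ : ℚ_[p]} (hb : b ≠ 0) (hB₁ : B₁ ≠ 0)
    (h : b.valuation + B₁.valuation < B₀.valuation) :
    b * B₁ + B₀ ≠ 0 ∧ (b * B₁ + B₀).valuation = b.valuation + B₁.valuation := by
  rw [← valuation_mul hb hB₁] at h ⊢
  exact add_ne_zero_and_valuation_add_eq_of_lt (mul_ne_zero hb hB₁) h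

theorem ne_zero_and_valuation_eq_sum_of_recurrence (b B : ℕ → ℚ_[p])
    (hbne : ∀ n : ℕ, 1 ≤ n → b n ≠ 0)
    (hval : ∀ n : ℕ, 1 ≤ n → (b n).valuation + (b (n + 1)).valuation < 0)
    (hB0 : B 0 = 1) (hB1 : B 1 = b 1) (hB : ∀ n, B (n + 2) = b (n + 2) * B (n + 1) + B n)
    (n : ℕ) : B n ≠ 0 ∧ (B n).valuation = ∑ i ∈ Icc 1 n, (b i).valuation := by
  let P : ℕ → Prop := fun n ↦ B n ≠ 0 ∧ (B n).valuation = ∑ i ∈ Icc 1 n, (b i).valuation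
  have sum_succ (n : ℕ) : ∑ i ∈ Icc 1 (n + 1), (b i).valuation =
      ∑ i ∈ Icc 1 n, (b i).valuation + (b (n + 1)).valuation :=
    sum_Icc_succ_top (by omega) _
  suffices ∀ n, P n ∧ P (n + 1) from (this n).1
  intro n
  induction n with
  | zero => exact ⟨⟨by simp [hB0], by simp [hB0]⟩, ⟨hB1 ▸ hbne 1 le_rfl, by simp [hB1]⟩⟩
  | succ n ih =>
    obtain ⟨⟨-, hvn⟩, hn₁, hvn₁⟩ := ih
    have hlt : (b (n + 2)).valuation + (B (n + 1)).valuation < (B n).valuation := by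
      have : (b (n + 1)).valuation + (b (n + 2)).valuation < 0 := hval (n + 1) le_add_self
      rw [hvn₁, hvn, sum_succ]
      omega
    refine ⟨⟨hn₁, hvn₁⟩, ?_⟩
    obtain ⟨hne, hv⟩ := mul_add_ne_zero_and_valuation_eq (hbne (n + 2) (by omega)) hn₁ hlt
    refine ⟨hB n ▸ hne, ?_⟩
    rw [hB n, hv, hvn₁, sum_succ (n + 1)]
    ring

end Padic

theorem stmt_11_general (p : ℕ) [Fact p.Prime] (b : ℕ → ℚ_[p])
    (hbne : ∀ n : ℕ, 1 ≤ n → b n ≠ 0)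
    (hval : ∀ n : ℕ, 1 ≤ n → (b n).valuation + (b (n + 1)).valuation < 0)
    (B : ℕ → ℚ_[p]) (hB0 : B 0 = 1) (hB1 : B 1 = b 1)
    (hB : ∀ n, B (n + 2) = b (n + 2) * B (n + 1) + B n) :
    ∀ n : ℕ, 1 ≤ n → B n ≠ 0 ∧ (B n).valuation = ∑ i ∈ Finset.Icc 1 n, (b i).valuation :=
  fun n _ ↦ Padic.ne_zero_and_valuation_eq_sum_of_recurrence b B hbne hval hB0 hB1 hB n

theorem stmt_11 (p : ℕ) [Fact p.Prime] (hp : p ≠ 2) (b : ℕ → ℚ_[p])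
    (hbne : ∀ n : ℕ, 1 ≤ n → b n ≠ 0)
    (hval : ∀ n : ℕ, 1 ≤ n → (b n).valuation + (b (n + 1)).valuation < 0)
    (B : ℕ → ℚ_[p]) (hB0 : B 0 = 1) (hB1 : B 1 = b 1)
    (hB : ∀ n, B (n + 2) = b (n + 2) * B (n + 1) + B n) :
    ∀ n : ℕ, 1 ≤ n → B n ≠ 0 ∧ (B n).valuation = ∑ i ∈ Finset.Icc 1 n, (b i).valuation :=
  stmt_11_general p b hbne hval B hB0 hB1 hB
end

section
/- Let p be an odd prime and let α₀ ∈ ℚ_p be an element not lying in the image of ℚ. Let (α_n), (b_n) be the sequences produced by Algorithm (3) applied to α₀ and let A_n, B_n be the convergents of the continued fraction [b_0, b_1, b_2, …]. Then for every n ≥ 0, B_n ≠ 0, B_{n+1} ≠ 0, and ‖α₀ − A_n/B_n‖_p = (‖B_n‖_p · ‖B_{n+1}‖_p)⁻¹. -/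
/-- Algorithm (3): `b n = s (α n)` for even `n`, `b n = t (α n)` for odd `n`,
and `α (n + 1) = (α n - b n)⁻¹`. -/
def Alg3 (p : ℕ) [Fact p.Prime] (α : ℕ → ℚ_[p]) (b : ℕ → ℚ) : Prop :=
  (∀ n, Even n → IsIntFloor p (α n) (b n)) ∧
  (∀ n, Odd n → IsFracFloor p (α n) (b n)) ∧
  ∀ n, α (n + 1) = (α n - (b n : ℚ_[p]))⁻¹

open Finset

section ContinuedFraction

variable {K : Type*} {x c P Q : ℕ → K}

section Field

variable [Field K]

theorem mul_den_sub_num_succ_mul_eq_neg (hx : ∀ n, x (n + 1) * (x n - c n) = 1)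
    (hP0 : P 0 = c 0) (hP1 : P 1 = c 1 * c 0 + 1)
    (hP : ∀ n, P (n + 2) = c (n + 2) * P (n + 1) + P n)
    (hQ0 : Q 0 = 1) (hQ1 : Q 1 = c 1) (hQ : ∀ n, Q (n + 2) = c (n + 2) * Q (n + 1) + Q n)
    (n : ℕ) : (x 0 * Q (n + 1) - P (n + 1)) * x (n + 2) = -(x 0 * Q n - P n) := by
  induction n with
  | zero =>
    rw [hQ0, hQ1, hP0, hP1]
    linear_combination x 2 * hx 0 - (x 0 - c 0) * hx 1
  | succ n ih =>
    rw [hQ, hP]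
    linear_combination x (n + 3) * ih - (x 0 * Q (n + 1) - P (n + 1)) * hx (n + 2)

theorem mul_den_sub_num_eq_div_prod (hx : ∀ n, x (n + 1) * (x n - c n) = 1)
    (hP0 : P 0 = c 0) (hP1 : P 1 = c 1 * c 0 + 1)
    (hP : ∀ n, P (n + 2) = c (n + 2) * P (n + 1) + P n)
    (hQ0 : Q 0 = 1) (hQ1 : Q 1 = c 1) (hQ : ∀ n, Q (n + 2) = c (n + 2) * Q (n + 1) + Q n)
    (n : ℕ) : x 0 * Q n - P n = (-1) ^ n / ∏ k ∈ range (n + 1), x (k + 1) := by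
  have hx0 : ∀ n, x (n + 1) ≠ 0 := fun n h => by simpa [h] using hx n
  induction n with
  | zero =>
    rw [hQ0, hP0, zero_add, prod_range_one, eq_div_iff (hx0 0)]
    linear_combination hx 0
  | succ n ih =>
    have hstep := mul_den_sub_num_succ_mul_eq_neg hx hP0 hP1 hP hQ0 hQ1 hQ n
    rw [ih, ← eq_div_iff (hx0 (n + 1))] at hstep
    rw [hstep, prod_range_succ _ (n + 1), pow_succ]
    field_simp

end Field

section Ultrametric

variable [NormedField K]

theorem prod_norm_pos_of_one_lt_norm_mul (hc : ∀ n, 1 < ‖c (n + 1)‖ * ‖c (n + 2)‖) (n : ℕ) :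
    0 < ∏ k ∈ range n, ‖c (k + 1)‖ :=
  prod_pos fun k _ =>
    (norm_nonneg _).lt_of_ne' (left_ne_zero_of_mul (zero_lt_one.trans (hc k)).ne')

variable [IsUltrametricDist K]

theorem norm_add_eq_left_of_norm_lt {a b : K} (h : ‖b‖ < ‖a‖) : ‖a + b‖ = ‖a‖ := by
  rw [IsUltrametricDist.norm_add_eq_max_of_norm_ne_norm h.ne', max_eq_left h.le]

theorem norm_den_eq_prod (hc : ∀ n, 1 < ‖c (n + 1)‖ * ‖c (n + 2)‖)
    (hQ0 : Q 0 = 1) (hQ1 : Q 1 = c 1) (hQ : ∀ n, Q (n + 2) = c (n + 2) * Q (n + 1) + Q n)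
    (n : ℕ) : ‖Q n‖ = ∏ k ∈ range n, ‖c (k + 1)‖ := by
  induction n using Nat.twoStepInduction with
  | zero => simp [hQ0]
  | one => simp [hQ1]
  | more n ih₀ ih₁ =>
    have hdom : ‖Q n‖ < ‖c (n + 2) * Q (n + 1)‖ := by
      rw [norm_mul, ih₁, ih₀, prod_range_succ]
      nlinarith [hc n, prod_norm_pos_of_one_lt_norm_mul hc n]
    rw [hQ, norm_add_eq_left_of_norm_lt hdom, norm_mul, ih₁, prod_range_succ _ (n + 1)]
    ring

theorem norm_sub_num_div_den (hx : ∀ n, x (n + 1) * (x n - c n) = 1)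
    (hxc : ∀ n, ‖x (n + 1)‖ = ‖c (n + 1)‖) (hc : ∀ n, 1 < ‖c (n + 1)‖ * ‖c (n + 2)‖)
    (hP0 : P 0 = c 0) (hP1 : P 1 = c 1 * c 0 + 1)
    (hP : ∀ n, P (n + 2) = c (n + 2) * P (n + 1) + P n)
    (hQ0 : Q 0 = 1) (hQ1 : Q 1 = c 1) (hQ : ∀ n, Q (n + 2) = c (n + 2) * Q (n + 1) + Q n)
    (n : ℕ) : Q n ≠ 0 ∧ ‖x 0 - P n / Q n‖ = (‖Q n‖ * ‖Q (n + 1)‖)⁻¹ := by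
  have hQnorm := norm_den_eq_prod hc hQ0 hQ1 hQ
  have hQn : Q n ≠ 0 := by
    rw [← norm_pos_iff, hQnorm]
    exact prod_norm_pos_of_one_lt_norm_mul hc n
  have herr : ‖x 0 * Q n - P n‖ = ‖Q (n + 1)‖⁻¹ := by
    rw [mul_den_sub_num_eq_div_prod hx hP0 hP1 hP hQ0 hQ1 hQ, hQnorm, norm_div, norm_pow,
      norm_neg, norm_one, one_pow, norm_prod, one_div]
    simp only [hxc]
  refine ⟨hQn, ?_⟩
  rw [← mul_div_cancel_right₀ (x 0) hQn, ← sub_div, norm_div, herr, mul_inv, div_eq_mul_inv,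
    mul_comm]

end Ultrametric

end ContinuedFraction

theorem eq_ratCast_of_inv_sub_eq_ratCast {K : Type*} [Field K] [CharZero K] {x : K} {q r : ℚ}
    (h : (x - q)⁻¹ = r) : x = ((q + r⁻¹ : ℚ) : K) := by
  rw [Rat.cast_add, Rat.cast_inv, ← h, inv_inv, add_sub_cancel]

namespace Alg3

variable {p : ℕ} [Fact p.Prime] {α : ℕ → ℚ_[p]} {b : ℕ → ℚ}

theorem ne_ratCast (halg : Alg3 p α b) (hirr : ∀ q : ℚ, α 0 ≠ q) (n : ℕ) (q : ℚ) :
    α n ≠ q := by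
  induction n generalizing q with
  | zero => exact hirr q
  | succ n ih =>
    exact fun h => ih _ (eq_ratCast_of_inv_sub_eq_ratCast ((halg.2.2 n).symm.trans h))

theorem sub_ne_zero (halg : Alg3 p α b) (hirr : ∀ q : ℚ, α 0 ≠ q) (n : ℕ) :
    α n - b n ≠ 0 :=
  _root_.sub_ne_zero.mpr (halg.ne_ratCast hirr n (b n))

theorem mul_sub_eq_one (halg : Alg3 p α b) (hirr : ∀ q : ℚ, α 0 ≠ q) (n : ℕ) :
    α (n + 1) * (α n - b n) = 1 := by
  rw [halg.2.2 n]
  exact inv_mul_cancel₀ (halg.sub_ne_zero hirr n)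

theorem norm_sub_le_one (halg : Alg3 p α b) (n : ℕ) : ‖α n - b n‖ ≤ 1 := by
  rcases Nat.even_or_odd n with hn | hn
  · exact (halg.1 n hn).2.2.le
  · exact (halg.2.1 n hn).2.2

theorem one_le_norm_succ (halg : Alg3 p α b) (hirr : ∀ q : ℚ, α 0 ≠ q) (n : ℕ) :
    1 ≤ ‖α (n + 1)‖ := by
  rw [halg.2.2 n, norm_inv]
  exact one_le_inv₀ (norm_pos_iff.mpr (halg.sub_ne_zero hirr n)) |>.mpr
    (halg.norm_sub_le_one n)

theorem one_lt_norm_succ_of_even (halg : Alg3 p α b) (hirr : ∀ q : ℚ, α 0 ≠ q) {n : ℕ}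
    (hn : Even n) : 1 < ‖α (n + 1)‖ := by
  rw [halg.2.2 n, norm_inv]
  exact one_lt_inv₀ (norm_pos_iff.mpr (halg.sub_ne_zero hirr n)) |>.mpr
    (halg.1 n hn).2.2

theorem norm_ratCast_eq (halg : Alg3 p α b) (hirr : ∀ q : ℚ, α 0 ≠ q) (n : ℕ) :
    ‖α (n + 1)‖ = ‖((b (n + 1) : ℚ) : ℚ_[p])‖ := by
  refine Padic.norm_eq_of_norm_sub_lt_left ?_
  rcases Nat.even_or_odd n with hn | hn
  · exact (halg.norm_sub_le_one (n + 1)).trans_lt (halg.one_lt_norm_succ_of_even hirr hn)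
  · exact (halg.1 (n + 1) hn.add_one).2.2.trans_le (halg.one_le_norm_succ hirr n)

theorem one_lt_norm_mul (halg : Alg3 p α b) (hirr : ∀ q : ℚ, α 0 ≠ q) (n : ℕ) :
    1 < ‖((b (n + 1) : ℚ) : ℚ_[p])‖ * ‖((b (n + 2) : ℚ) : ℚ_[p])‖ := by
  rw [← halg.norm_ratCast_eq hirr, ← halg.norm_ratCast_eq hirr]
  rcases Nat.even_or_odd n with hn | hn
  · exact one_lt_mul_of_lt_of_le (halg.one_lt_norm_succ_of_even hirr hn)
      (halg.one_le_norm_succ hirr (n + 1))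
  · exact one_lt_mul_of_le_of_lt (halg.one_le_norm_succ hirr n)
      (halg.one_lt_norm_succ_of_even hirr hn.add_one)

end Alg3

theorem stmt_12_general (p : ℕ) [Fact p.Prime]
    (α₀ : ℚ_[p]) (hirr : ∀ q : ℚ, α₀ ≠ (q : ℚ_[p]))
    (α : ℕ → ℚ_[p]) (b : ℕ → ℚ) (h0 : α 0 = α₀) (halg : Alg3 p α b)
    (A B : ℕ → ℚ)
    (hA0 : A 0 = b 0) (hA1 : A 1 = b 1 * b 0 + 1)
    (hA : ∀ n, A (n + 2) = b (n + 2) * A (n + 1) + A n)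
    (hB0 : B 0 = 1) (hB1 : B 1 = b 1)
    (hB : ∀ n, B (n + 2) = b (n + 2) * B (n + 1) + B n) :
    ∀ n : ℕ, B n ≠ 0 ∧ B (n + 1) ≠ 0 ∧
      ‖α₀ - ((A n / B n : ℚ) : ℚ_[p])‖ =
        (‖((B n : ℚ) : ℚ_[p])‖ * ‖((B (n + 1) : ℚ) : ℚ_[p])‖)⁻¹ := by
  subst h0
  have hconv := norm_sub_num_div_den (x := α) (c := fun n => (b n : ℚ_[p]))
    (P := fun n => (A n : ℚ_[p])) (Q := fun n => (B n : ℚ_[p]))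
    (halg.mul_sub_eq_one hirr) (halg.norm_ratCast_eq hirr) (halg.one_lt_norm_mul hirr)
    (by simp [hA0]) (by simp [hA1]) (fun n => by simp [hA n]) (by simp [hB0]) (by simp [hB1])
    (fun n => by simp [hB n])
  intro n
  refine ⟨Rat.cast_ne_zero.mp (hconv n).1, Rat.cast_ne_zero.mp (hconv (n + 1)).1, ?_⟩
  rw [Rat.cast_div]
  exact (hconv n).2

/-- For `α₀ ∈ ℚ_p` not rational, with Algorithm (3) sequences `(α n)`, `(b n)` and
convergents `A n / B n` (where `A (-1) = 1, A 0 = b 0, B (-1) = 0, B 0 = 1`, the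
`-1`-indexed values being absorbed in the stated values of `A 0, A 1, B 0, B 1`),
we have `‖α₀ - A n / B n‖_p = (‖B n‖_p · ‖B (n+1)‖_p)⁻¹` for all `n ≥ 0`. -/
theorem stmt_12 (p : ℕ) [Fact p.Prime] (hp : p ≠ 2)
    (α₀ : ℚ_[p]) (hirr : ∀ q : ℚ, α₀ ≠ (q : ℚ_[p]))
    (α : ℕ → ℚ_[p]) (b : ℕ → ℚ) (h0 : α 0 = α₀) (halg : Alg3 p α b)
    (A B : ℕ → ℚ)
    (hA0 : A 0 = b 0) (hA1 : A 1 = b 1 * b 0 + 1)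
    (hA : ∀ n, A (n + 2) = b (n + 2) * A (n + 1) + A n)
    (hB0 : B 0 = 1) (hB1 : B 1 = b 1)
    (hB : ∀ n, B (n + 2) = b (n + 2) * B (n + 1) + B n) :
    ∀ n : ℕ, B n ≠ 0 ∧ B (n + 1) ≠ 0 ∧
      ‖α₀ - ((A n / B n : ℚ) : ℚ_[p])‖ =
        (‖((B n : ℚ) : ℚ_[p])‖ * ‖((B (n + 1) : ℚ) : ℚ_[p])‖)⁻¹ :=
  stmt_12_general p α₀ hirr α b h0 halg A B hA0 hA1 hA hB0 hB1 hB
end
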